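/- For any simple graph G with maximum degree Δ and maximum matching size ν, the number of edges satisfies |E(G)| ≤ Δν + ⌊ν/⌈Δ/2⌉⌋·⌊Δ/2⌋. -/

import Mathlib

open scoped Classical

/-- `M` is a matching of `G`, given as a finite set of edges. -/
def IsMatchingFinset {V : Type*} (G : SimpleGraph V) (M : Finset (Sym2 V)) : Prop :=
  (M : Set (Sym2 V)) ⊆ G.edgeSet ∧
    ∀ e ∈ M, ∀ f ∈ M, e ≠ f → ∀ v : V, ¬(v ∈ e ∧ v ∈ f)

/-- ν(G): the maximum size of a matching of `G`. -/
noncomputable def matchingNumber {V : Type*} (G : SimpleGraph V) : ℕ :=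
  sSup {n | ∃ M : Finset (Sym2 V), IsMatchingFinset G M ∧ M.card = n}

/-- A proper edge coloring of `G` using colors `< n`. -/
def IsProperEdgeColoring {V : Type*} (G : SimpleGraph V) (n : ℕ) (c : Sym2 V → ℕ) : Prop :=
  (∀ e ∈ G.edgeSet, c e < n) ∧
    ∀ e ∈ G.edgeSet, ∀ f ∈ G.edgeSet, e ≠ f → (∃ v : V, v ∈ e ∧ v ∈ f) → c e ≠ c f

/-- χ'(G): the edge chromatic index of `G`. -/
noncomputable def chromaticIndex {V : Type*} (G : SimpleGraph V) : ℕ :=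
  sInf {n | ∃ c : Sym2 V → ℕ, IsProperEdgeColoring G n c}

/-- `G` is friendly-edge-colorable: its edge set is partitioned into maximum matchings. -/
noncomputable def Friendly {V : Type*} [Fintype V] (G : SimpleGraph V) : Prop :=
  ∃ P : Finset (Finset (Sym2 V)),
    (∀ M ∈ P, IsMatchingFinset G M ∧ M.card = matchingNumber G) ∧
    (∀ e, e ∈ G.edgeFinset ↔ ∃ M ∈ P, e ∈ M) ∧
    ∀ M ∈ P, ∀ N ∈ P, M ≠ N → Disjoint M N

/-- The graph `G` with vertex `x` deleted. -/
def delVert {V : Type*} (G : SimpleGraph V) (x : V) : SimpleGraph {v : V // v ≠ x} :=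
  G.induce {v : V | v ≠ x}

/-- `G` has a perfect matching. -/
def HasPerfectMatchingFinset {V : Type*} (G : SimpleGraph V) : Prop :=
  ∃ M : Finset (Sym2 V), IsMatchingFinset G M ∧ ∀ v : V, ∃ e ∈ M, v ∈ e

/-- `G` is factor-critical. -/
def FactorCritical {V : Type*} (G : SimpleGraph V) : Prop :=
  G.Connected ∧ ∀ x : V, HasPerfectMatchingFinset (delVert G x)


/-!
Induction on `ν`. If some vertex `v` is saturated by every maximum matching, deleting the edges
at `v` lowers `ν` and removes at most `Δ` edges, while the bound drops by at least `Δ` when `ν`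
does. Otherwise every vertex is missed by some maximum matching, and then (Gallai's lemma) a
maximum matching `M` misses at most one vertex in each component. A component containing `m` edges
of `M` thus has at most `2m + 1` vertices, hence at most `Δm + ⌊Δ/2⌋` edges, and at most `Δm` edges
when `m < ⌈Δ/2⌉`, because it then has at most `Δ` vertices. At most `ν / ⌈Δ/2⌉` components have
`m ≥ ⌈Δ/2⌉`.
-/
section Matching

variable {V : Type*} {G : SimpleGraph V} {M N : Finset (Sym2 V)} {e f : Sym2 V} {v w y : V}

def Saturates (M : Finset (Sym2 V)) (v : V) : Prop := ∃ e ∈ M, v ∈ e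

lemma saturates_insert : Saturates (insert f M) y ↔ y ∈ f ∨ Saturates M y := by
  simp [Saturates]

lemma saturates_union : Saturates (M ∪ N) y ↔ Saturates M y ∨ Saturates N y := by
  simp only [Saturates, Finset.mem_union, or_and_right, exists_or]

lemma Saturates.mono (h : Saturates M y) (hMN : M ⊆ N) : Saturates N y :=
  let ⟨e, he, hye⟩ := h; ⟨e, hMN he, hye⟩

lemma saturates_iff_erase (he : e ∈ M) : Saturates M y ↔ Saturates (M.erase e) y ∨ y ∈ e := by
  refine ⟨fun ⟨f, hf, hyf⟩ => ?_, ?_⟩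
  · rcases eq_or_ne f e with rfl | hfe
    exacts [Or.inr hyf, Or.inl ⟨f, Finset.mem_erase.2 ⟨hfe, hf⟩, hyf⟩]
  · rintro (h | h)
    exacts [h.mono (M.erase_subset e), ⟨e, he, h⟩]

lemma isMatchingFinset_empty (G : SimpleGraph V) : IsMatchingFinset G ∅ := by
  simp [IsMatchingFinset]

namespace IsMatchingFinset

lemma mono {H : SimpleGraph V} (hGH : G ≤ H) (hM : IsMatchingFinset G M) :
    IsMatchingFinset H M :=
  ⟨hM.1.trans (SimpleGraph.edgeSet_mono hGH), hM.2⟩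

lemma subset (hM : IsMatchingFinset G M) (hNM : N ⊆ M) : IsMatchingFinset G N :=
  ⟨(Finset.coe_subset.2 hNM).trans hM.1, fun e he f hf => hM.2 e (hNM he) f (hNM hf)⟩

lemma eq_of_mem (hM : IsMatchingFinset G M) (he : e ∈ M) (hf : f ∈ M) (hve : v ∈ e)
    (hvf : v ∈ f) : e = f :=
  by_contra fun hef => hM.2 e he f hf hef v ⟨hve, hvf⟩

lemma saturates_erase (hM : IsMatchingFinset G M) (he : e ∈ M) :
    Saturates (M.erase e) y ↔ Saturates M y ∧ y ∉ e := by
  constructor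
  · rintro ⟨f, hf, hyf⟩
    exact ⟨⟨f, Finset.mem_of_mem_erase hf, hyf⟩, fun hye =>
      Finset.ne_of_mem_erase hf (hM.eq_of_mem (Finset.mem_of_mem_erase hf) he hyf hye)⟩
  · rintro ⟨⟨f, hf, hyf⟩, hye⟩
    exact ⟨f, Finset.mem_erase.2 ⟨by rintro rfl; exact hye hyf, hf⟩, hyf⟩

lemma insert (hM : IsMatchingFinset G M) (he : e ∈ G.edgeSet)
    (hfree : ∀ v ∈ e, ¬ Saturates M v) :
    IsMatchingFinset G (insert e M) ∧ (insert e M).card = M.card + 1 := by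
  have heM : e ∉ M := fun heM => hfree _ e.out_fst_mem ⟨e, heM, e.out_fst_mem⟩
  refine ⟨⟨?_, ?_⟩, Finset.card_insert_of_notMem heM⟩
  · rw [Finset.coe_insert]
    exact Set.insert_subset he hM.1
  · simp only [Finset.mem_insert]
    rintro a (rfl | ha) b (rfl | hb) hab v ⟨hva, hvb⟩
    · exact hab rfl
    · exact hfree v hva ⟨b, hb, hvb⟩
    · exact hfree v hvb ⟨a, ha, hva⟩
    · exact hM.2 a ha b hb hab v ⟨hva, hvb⟩

end IsMatchingFinset

end Matching

section Exchange

variable {V : Type*} {G : SimpleGraph V} {M N : Finset (Sym2 V)} {w w' w'' : V}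

/-- `M'` arises from `M` by switching along an alternating path from `w` to `x`. -/
def IsExchange (M M' : Finset (Sym2 V)) (w x : V) : Prop :=
  M'.card = M.card ∧ ¬ Saturates M' w ∧ ∀ y, (Saturates M' y ∨ y = w ↔ Saturates M y ∨ y = x)

lemma exists_augment_of_erase (hM : IsMatchingFinset G M) (hN : IsMatchingFinset G N)
    (heM : s(w, w') ∈ M) (hfN : s(w', w'') ∈ N) (hwN : ¬ Saturates N w)
    {N₁ : Finset (Sym2 V)} (hN₁sub : N₁ ⊆ M.erase s(w, w') ∪ N.erase s(w', w''))
    (hN₁ : IsMatchingFinset G N₁) (hN₁card : N₁.card = (N.erase s(w', w'')).card + 1) :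
    ∃ N' ⊆ M ∪ N, IsMatchingFinset G N' ∧ N'.card = N.card + 1 := by
  have hfree : ∀ v ∈ s(w, w'), ¬ Saturates N₁ v := by
    intro v hv hvN₁
    rcases saturates_union.1 (hvN₁.mono hN₁sub) with h | h
    · exact ((hM.saturates_erase heM).1 h).2 hv
    · rw [hN.saturates_erase hfN] at h
      rcases Sym2.mem_iff.1 hv with rfl | rfl
      exacts [hwN h.1, h.2 (Sym2.mem_mk_left _ _)]
  obtain ⟨hN', hN'card⟩ := hN₁.insert (hM.1 heM) hfree
  refine ⟨_, Finset.insert_subset (Finset.mem_union_left _ heM) (hN₁sub.trans ?_), hN', ?_⟩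
  · exact Finset.union_subset_union (M.erase_subset _) (N.erase_subset _)
  · rw [hN'card, hN₁card, Finset.card_erase_add_one hfN]

lemma exists_exchange_of_erase (hM : IsMatchingFinset G M) (hN : IsMatchingFinset G N)
    (heM : s(w, w') ∈ M) (hfN : s(w', w'') ∈ N) (hwN : ¬ Saturates N w)
    {M₁ : Finset (Sym2 V)} {x : V} (hM₁ : IsMatchingFinset G M₁)
    (hexch : IsExchange (M.erase s(w, w')) M₁ w'' x)
    (hx : Saturates (N.erase s(w', w'')) x ∨ x = w'') :
    ∃ M' x, IsMatchingFinset G M' ∧ IsExchange M M' w x ∧ (Saturates N x ∨ x = w) := by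
  obtain ⟨hM₁card, hw''M₁, hcov⟩ := hexch
  have hww' : w ≠ w' := G.ne_of_adj (hM.1 heM)
  have hw'w'' : w' ≠ w'' := G.ne_of_adj (hN.1 hfN)
  have hww'' : w ≠ w'' := by rintro rfl; exact hwN ⟨_, hfN, Sym2.mem_mk_right _ _⟩
  have hxw : x ≠ w ∧ x ≠ w' := by
    rcases hx with hx | rfl
    · rw [hN.saturates_erase hfN, Sym2.mem_iff, not_or] at hx
      exact ⟨fun h => hwN (h ▸ hx.1), hx.2.1⟩
    · exact ⟨hww''.symm, hw'w''.symm⟩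
  have hsatM₁ : ∀ y, Saturates M₁ y → y ≠ w ∧ y ≠ w' := by
    intro y hy
    rcases (hcov y).1 (Or.inl hy) with hy | rfl
    · rw [hM.saturates_erase heM, Sym2.mem_iff, not_or] at hy
      exact hy.2
    · exact hxw
  have hfree : ∀ v ∈ s(w', w''), ¬ Saturates M₁ v := by
    simp only [Sym2.mem_iff]
    rintro v (rfl | rfl) hv
    exacts [(hsatM₁ _ hv).2 rfl, hw''M₁ hv]
  obtain ⟨hM', hM'card⟩ := hM₁.insert (hN.1 hfN) hfree
  refine ⟨_, x, hM', ⟨by rw [hM'card, hM₁card, Finset.card_erase_add_one heM], ?_, ?_⟩, ?_⟩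
  · rw [saturates_insert, Sym2.mem_iff]
    rintro ((h | h) | h)
    exacts [hww' h, hww'' h, (hsatM₁ _ h).1 rfl]
  · intro y
    have := hcov y
    rw [saturates_insert, saturates_iff_erase heM, Sym2.mem_iff, Sym2.mem_iff]
    tauto
  · rcases hx with hx | rfl
    · exact Or.inl (hx.mono (N.erase_subset _))
    · exact Or.inl ⟨_, hfN, Sym2.mem_mk_right _ _⟩

end Exchange

/-- Either `N` has an augmenting path inside `M ∪ N`, or the alternating path of `M ∪ N` starting
at `w` yields an exchange; when `M` misses `w` this path is trivial and `x = w`. -/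
theorem IsMatchingFinset.augment_or_exchange {V : Type*} {G : SimpleGraph V}
    {M N : Finset (Sym2 V)} {w : V} (hM : IsMatchingFinset G M)
    (hN : IsMatchingFinset G N) (hwN : ¬ Saturates N w) :
    (∃ N' ⊆ M ∪ N, IsMatchingFinset G N' ∧ N'.card = N.card + 1) ∨
    ∃ M' x, IsMatchingFinset G M' ∧ IsExchange M M' w x ∧ (Saturates N x ∨ x = w) := by
  by_cases hwM : Saturates M w
  swap
  · exact Or.inr ⟨M, w, hM, ⟨rfl, hwM, fun y => Iff.rfl⟩, Or.inr rfl⟩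
  obtain ⟨e, heM, hwe⟩ := hwM
  obtain ⟨w', rfl⟩ := Sym2.mem_iff_exists.1 hwe
  by_cases hw'N : Saturates N w'
  swap
  · have hfree : ∀ v ∈ s(w, w'), ¬ Saturates N v := by
      simp only [Sym2.mem_iff]; rintro v (rfl | rfl) <;> assumption
    exact Or.inl ⟨_, Finset.insert_subset (Finset.mem_union_left _ heM)
      Finset.subset_union_right, hN.insert (hM.1 heM) hfree⟩
  obtain ⟨f, hfN, hw'f⟩ := hw'N
  obtain ⟨w'', rfl⟩ := Sym2.mem_iff_exists.1 hw'f
  have hw''N₀ : ¬ Saturates (N.erase s(w', w'')) w'' := by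
    rw [hN.saturates_erase hfN]
    exact fun h => h.2 (Sym2.mem_mk_right _ _)
  rcases (hM.subset (M.erase_subset _)).augment_or_exchange (hN.subset (N.erase_subset _))
      hw''N₀ with ⟨N₁, hN₁sub, hN₁, hN₁card⟩ | ⟨M₁, x, hM₁, hexch, hx⟩
  · exact Or.inl (exists_augment_of_erase hM hN heM hfN hwN hN₁sub hN₁ hN₁card)
  · exact Or.inr (exists_exchange_of_erase hM hN heM hfN hwN hM₁ hexch hx)
termination_by N.card
decreasing_by exact Finset.card_erase_lt_of_mem hfN

section MaximumMatching

variable {V : Type*} [Fintype V] {G : SimpleGraph V} {M : Finset (Sym2 V)}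

def IsMaximumMatching (G : SimpleGraph V) (M : Finset (Sym2 V)) : Prop :=
  IsMatchingFinset G M ∧ M.card = matchingNumber G

lemma bddAbove_card_isMatchingFinset (G : SimpleGraph V) :
    BddAbove {n | ∃ M : Finset (Sym2 V), IsMatchingFinset G M ∧ M.card = n} := by
  refine ⟨G.edgeFinset.card, ?_⟩
  rintro n ⟨M, hM, rfl⟩
  exact Finset.card_le_card fun e he => G.mem_edgeFinset.2 (hM.1 he)

lemma IsMatchingFinset.card_le_matchingNumber (hM : IsMatchingFinset G M) :
    M.card ≤ matchingNumber G :=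
  le_csSup (bddAbove_card_isMatchingFinset G) ⟨M, hM, rfl⟩

lemma exists_isMaximumMatching (G : SimpleGraph V) : ∃ M, IsMaximumMatching G M := by
  refine Nat.sSup_mem ?_ (bddAbove_card_isMatchingFinset G)
  exact ⟨0, ∅, isMatchingFinset_empty G, rfl⟩

lemma IsMaximumMatching.saturates_or_saturates_of_adj (hM : IsMaximumMatching G M) {u v : V}
    (huv : G.Adj u v) : Saturates M u ∨ Saturates M v := by
  by_contra! h
  have hfree : ∀ x ∈ s(u, v), ¬ Saturates M x := by
    simp only [Sym2.mem_iff]; rintro x (rfl | rfl); exacts [h.1, h.2]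
  obtain ⟨hM', hcard⟩ := hM.1.insert huv hfree
  have := hM'.card_le_matchingNumber
  have := hM.2
  omega

/-- Gallai's lemma. Stepping from `u` to the next vertex `w` of a walk to `v`, an exchange along
the alternating path from `w` yields a maximum matching missing `w` and one of `u`, `v`. -/
theorem IsMaximumMatching.eq_of_reachable
    (hmiss : ∀ v, ∃ N, IsMaximumMatching G N ∧ ¬ Saturates N v) {u v : V}
    (huv : G.Reachable u v) :
    ∀ {M}, IsMaximumMatching G M → ¬ Saturates M u → ¬ Saturates M v → u = v := by
  obtain ⟨p⟩ := huv
  induction p with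
  | nil => exact fun _ _ _ => rfl
  | @cons u w v huw q ih =>
    intro M hM hu hv
    obtain ⟨N, hN, hwN⟩ := hmiss w
    rcases hM.1.augment_or_exchange hN.1 hwN with
      ⟨N', -, hN', hcard⟩ | ⟨M', x, hM', ⟨hcard, hwM', hcov⟩, -⟩
    · have := hN'.card_le_matchingNumber
      have := hN.2
      omega
    have hM'max : IsMaximumMatching G M' := ⟨hM', hcard.trans hM.2⟩
    by_cases hxv : x = v
    · by_contra huv
      have huM' : ¬ Saturates M' u := fun h => by
        rcases (hcov u).1 (Or.inl h) with h | h
        exacts [hu h, huv (h.trans hxv)]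
      exact (hM'max.saturates_or_saturates_of_adj huw).elim huM' hwM'
    · have hvM' : ¬ Saturates M' v := fun h => by
        rcases (hcov v).1 (Or.inl h) with h | h
        exacts [hv h, hxv h.symm]
      obtain rfl := ih hM'max hwM' hvM'
      exact ((hM.saturates_or_saturates_of_adj huw).elim hu hv).elim

end MaximumMatching

namespace SimpleGraph

variable {V : Type*} (G : SimpleGraph V)

lemma connectedComponentMk_eq_of_mem_edgeSet {e : Sym2 V} (he : e ∈ G.edgeSet) {x y : V}
    (hx : x ∈ e) (hy : y ∈ e) : G.connectedComponentMk x = G.connectedComponentMk y := by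
  induction e with
  | _ a b =>
    have hab := ConnectedComponent.sound (G.mem_edgeSet.1 he).reachable
    rcases Sym2.mem_iff.1 hx with rfl | rfl <;> rcases Sym2.mem_iff.1 hy with rfl | rfl
    exacts [rfl, hab, hab.symm, rfl]

noncomputable def edgeComponent (e : Sym2 V) : G.ConnectedComponent :=
  G.connectedComponentMk e.out.1

variable {G}

lemma edgeComponent_eq {e : Sym2 V} (he : e ∈ G.edgeSet) {v : V} (hv : v ∈ e) :
    G.edgeComponent e = G.connectedComponentMk v :=
  G.connectedComponentMk_eq_of_mem_edgeSet he e.out_fst_mem hv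

variable [Fintype V] [DecidableRel G.Adj]

lemma degree_lt_card_supp {c : G.ConnectedComponent} {v : V} (hv : v ∈ c.supp) :
    G.degree v < c.supp.toFinset.card := by
  rw [← G.card_neighborFinset_eq_degree]
  refine Finset.card_lt_card
    ⟨fun u hu => ?_, fun h => G.irrefl ((G.mem_neighborFinset v v).1 (h ?_))⟩
  · rw [Set.mem_toFinset]
    exact (c.mem_supp_congr_adj ((G.mem_neighborFinset v u).1 hu)).1 hv
  · exact Set.mem_toFinset.2 hv

lemma two_mul_card_filter_edgeComponent (c : G.ConnectedComponent) :
    2 * (G.edgeFinset.filter (G.edgeComponent · = c)).card = ∑ v ∈ c.supp.toFinset, G.degree v := by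
  set E := G.edgeFinset.filter (G.edgeComponent · = c)
  have hinc : ∀ v ∈ c.supp.toFinset, G.degree v = (E.filter (v ∈ ·)).card := by
    intro v hv
    rw [← G.card_incidenceFinset_eq_degree]
    congr 1
    ext e
    simp only [mem_incidenceFinset, Finset.mem_filter, E, mem_edgeFinset]
    refine ⟨fun ⟨he, hve⟩ => ⟨⟨he, ?_⟩, hve⟩, fun ⟨⟨he, _⟩, hve⟩ => ⟨he, hve⟩⟩
    rw [edgeComponent_eq he hve]
    exact (c.mem_supp_iff v).1 (Set.mem_toFinset.1 hv)
  have hends : ∀ e ∈ E, (c.supp.toFinset.filter (· ∈ e)).card = 2 := by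
    intro e he
    obtain ⟨he, hec⟩ := Finset.mem_filter.1 he
    rw [G.mem_edgeFinset] at he
    rw [← Sym2.card_toFinset_of_not_isDiag e (G.not_isDiag_of_mem_edgeSet he)]
    congr 1
    ext v
    simp only [Finset.mem_filter, Set.mem_toFinset, Sym2.mem_toFinset, c.mem_supp_iff,
      and_iff_right_iff_imp]
    intro hv
    rw [← hec, edgeComponent_eq he hv]
  rw [Finset.sum_congr rfl hinc, Finset.card_eq_sum_ones, Finset.mul_sum]
  simp only [Finset.card_filter]
  rw [Finset.sum_comm]
  refine Finset.sum_congr rfl fun e he => ?_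
  rw [← hends e he, Finset.card_filter]
  simp

lemma card_supp_le {M : Finset (Sym2 V)} (hM : IsMatchingFinset G M)
    (hsep : ∀ u v, ¬ Saturates M u → ¬ Saturates M v → G.Reachable u v → u = v)
    (c : G.ConnectedComponent) :
    c.supp.toFinset.card ≤ 2 * (M.filter (G.edgeComponent · = c)).card + 1 := by
  set S := c.supp.toFinset
  set Mc := M.filter (G.edgeComponent · = c)
  have hsat : (S.filter (Saturates M)).card ≤ 2 * Mc.card := by
    calc _ ≤ (Mc.biUnion Sym2.toFinset).card := Finset.card_le_card fun v hv => ?_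
      _ ≤ Mc.card * 2 := Finset.card_biUnion_le_card_mul _ _ _ fun e he =>
          (Sym2.card_toFinset_of_not_isDiag e
            (G.not_isDiag_of_mem_edgeSet (hM.1 (Finset.mem_of_mem_filter e he)))).le
      _ = 2 * Mc.card := mul_comm _ _
    obtain ⟨hvS, e, heM, hve⟩ := Finset.mem_filter.1 hv
    refine Finset.mem_biUnion.2 ⟨e, Finset.mem_filter.2 ⟨heM, ?_⟩, Sym2.mem_toFinset.2 hve⟩
    rw [edgeComponent_eq (hM.1 heM) hve]
    exact (c.mem_supp_iff v).1 (Set.mem_toFinset.1 hvS)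
  have hunsat : (S.filter (¬ Saturates M ·)).card ≤ 1 := by
    refine Finset.card_le_one.2 fun u hu v hv => ?_
    rw [Finset.mem_filter, Set.mem_toFinset] at hu hv
    exact hsep u v hu.2 hv.2 (c.reachable_of_mem_supp hu.1 hv.1)
  have := Finset.card_filter_add_card_filter_not (s := S) (Saturates M)
  omega

end SimpleGraph

/-- `(D + 1) / 2 = ⌈D/2⌉`; for `D = 0` the division by zero yields `0`, harmlessly since then
`D / 2 = 0`. -/
def chvatalHansonBound (D n : ℕ) : ℕ := D * n + n / ((D + 1) / 2) * (D / 2)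

lemma chvatalHansonBound_add_le {D n n' : ℕ} (h : n' < n) :
    chvatalHansonBound D n' + D ≤ chvatalHansonBound D n := by
  have hD : D * n' + D ≤ D * n := by
    simpa [mul_add] using Nat.mul_le_mul_left D (Nat.succ_le_of_lt h)
  have := Nat.mul_le_mul_right (D / 2) (Nat.div_le_div_right (c := (D + 1) / 2) h.le)
  unfold chvatalHansonBound
  omega

/-- The edge count `E` of one component with `s ≤ 2m + 1` vertices, of degrees at most `D` and
less than `s`. -/
lemma le_mul_add_ite_of_two_mul_le {D s m E : ℕ} (hD : 2 * E ≤ D * s) (hs : 2 * E + s ≤ s * s)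
    (hsm : s ≤ 2 * m + 1) : E ≤ D * m + if (D + 1) / 2 ≤ m then D / 2 else 0 := by
  split_ifs with hm
  · have : D * s ≤ 2 * (D * m) + D := by nlinarith
    omega
  · have hsD : s ≤ D := by omega
    nlinarith

lemma sum_le_chvatalHansonBound {ι : Type*} (s : Finset ι) (E m : ι → ℕ) {D : ℕ}
    (h : ∀ i ∈ s, E i ≤ D * m i + if (D + 1) / 2 ≤ m i then D / 2 else 0) :
    ∑ i ∈ s, E i ≤ chvatalHansonBound D (∑ i ∈ s, m i) := by
  set k := (D + 1) / 2
  set large := s.filter (k ≤ m ·)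
  have hlarge : large.card * k ≤ ∑ i ∈ s, m i := by
    rw [← smul_eq_mul]
    exact (large.card_nsmul_le_sum m k fun i hi => (Finset.mem_filter.1 hi).2).trans
      (Finset.sum_le_sum_of_subset (Finset.filter_subset _ _))
  have hlarge' : large.card * (D / 2) ≤ (∑ i ∈ s, m i) / k * (D / 2) := by
    rcases Nat.eq_zero_or_pos k with hk | hk
    · simp [show D / 2 = 0 by omega]
    · exact Nat.mul_le_mul_right _ ((Nat.le_div_iff_mul_le hk).2 hlarge)
  calc ∑ i ∈ s, E i ≤ ∑ i ∈ s, (D * m i + if k ≤ m i then D / 2 else 0) := Finset.sum_le_sum h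
    _ = D * ∑ i ∈ s, m i + large.card * (D / 2) := by
      rw [Finset.sum_add_distrib, Finset.mul_sum, ← Finset.sum_filter, Finset.sum_const,
        smul_eq_mul]
    _ ≤ chvatalHansonBound D (∑ i ∈ s, m i) := Nat.add_le_add_left hlarge' _

section Main

variable {V : Type*} [Fintype V]

lemma matchingNumber_deleteIncidenceSet_lt {G : SimpleGraph V} {v : V}
    (hv : ∀ M, IsMaximumMatching G M → Saturates M v) :
    matchingNumber (G.deleteIncidenceSet v) < matchingNumber G := by
  obtain ⟨M, hM⟩ := exists_isMaximumMatching (G.deleteIncidenceSet v)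
  have hMG : IsMatchingFinset G M := hM.1.mono (G.deleteIncidenceSet_le v)
  rw [← hM.2]
  refine hMG.card_le_matchingNumber.lt_of_ne fun h => ?_
  obtain ⟨e, he, hve⟩ := hv M ⟨hMG, h⟩
  have he' := hM.1.1 he
  rw [SimpleGraph.edgeSet_deleteIncidenceSet] at he'
  exact he'.2 ⟨he'.1, hve⟩

theorem card_edgeFinset_le_of_forall_exists_not_saturates (G : SimpleGraph V)
    [DecidableRel G.Adj] {D : ℕ} (hD : ∀ v, G.degree v ≤ D)
    (hmiss : ∀ v, ∃ N, IsMaximumMatching G N ∧ ¬ Saturates N v) :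
    G.edgeFinset.card ≤ chvatalHansonBound D (matchingNumber G) := by
  obtain ⟨M, hM⟩ := exists_isMaximumMatching G
  have hsep : ∀ u v, ¬ Saturates M u → ¬ Saturates M v → G.Reachable u v → u = v :=
    fun _ _ hu hv huv => IsMaximumMatching.eq_of_reachable hmiss huv hM hu hv
  rw [← hM.2, Finset.card_eq_sum_card_fiberwise (t := Finset.univ) (f := G.edgeComponent)
      fun _ _ => Finset.mem_univ _,
    Finset.card_eq_sum_card_fiberwise (s := M) (t := Finset.univ) (f := G.edgeComponent)
      fun _ _ => Finset.mem_univ _]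
  refine sum_le_chvatalHansonBound _ _ _ fun c _ => ?_
  refine le_mul_add_ite_of_two_mul_le ?_ ?_ (SimpleGraph.card_supp_le hM.1 hsep c)
  · rw [G.two_mul_card_filter_edgeComponent c, mul_comm, ← smul_eq_mul]
    exact Finset.sum_le_card_nsmul _ _ _ fun v _ => hD v
  · rw [G.two_mul_card_filter_edgeComponent c, Finset.card_eq_sum_ones, ← Finset.sum_add_distrib,
      ← Finset.card_eq_sum_ones, ← smul_eq_mul]
    exact Finset.sum_le_card_nsmul _ _ _ fun v hv =>
      SimpleGraph.degree_lt_card_supp (Set.mem_toFinset.1 hv)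

theorem card_edgeFinset_le_chvatalHansonBound (G : SimpleGraph V) [DecidableRel G.Adj] {D : ℕ}
    (hD : ∀ v, G.degree v ≤ D) : G.edgeFinset.card ≤ chvatalHansonBound D (matchingNumber G) := by
  induction hn : matchingNumber G using Nat.strong_induction_on generalizing G with
  | _ n ih =>
  subst hn
  by_cases hess : ∃ v, ∀ M, IsMaximumMatching G M → Saturates M v
  · obtain ⟨v, hv⟩ := hess
    have hlt := matchingNumber_deleteIncidenceSet_lt hv
    have hG' := ih _ hlt (G.deleteIncidenceSet v)
      (fun u => (SimpleGraph.degree_le_of_le (G.deleteIncidenceSet_le v)).trans (hD u)) rfl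
    have hcard := G.card_edgeFinset_deleteIncidenceSet v
    have hdeg := G.degree_le_card_edgeFinset (v := v)
    calc G.edgeFinset.card = (G.deleteIncidenceSet v).edgeFinset.card + G.degree v := by omega
      _ ≤ chvatalHansonBound D (matchingNumber (G.deleteIncidenceSet v)) + D :=
        add_le_add hG' (hD v)
      _ ≤ chvatalHansonBound D (matchingNumber G) := chvatalHansonBound_add_le hlt
  · push Not at hess
    exact card_edgeFinset_le_of_forall_exists_not_saturates G hD hess

end Main

theorem stmt_0_general {V : Type*} [Fintype V] (G : SimpleGraph V) :
    G.edgeFinset.card ≤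
      G.maxDegree * matchingNumber G +
        (matchingNumber G / ((G.maxDegree + 1) / 2)) * (G.maxDegree / 2) :=
  card_edgeFinset_le_chvatalHansonBound G G.degree_le_maxDegree

theorem stmt_0 {V : Type*} [Fintype V] (G : SimpleGraph V)
    (hiso : ∀ v : V, 0 < G.degree v) :
    G.edgeFinset.card ≤
      G.maxDegree * matchingNumber G +
        (matchingNumber G / ((G.maxDegree + 1) / 2)) * (G.maxDegree / 2) :=
  stmt_0_general G
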